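/- Let S be a commutative semigroup, A ⊆ S piecewise syndetic with witnessing finite set E = {c₁,...,c_r} (so that ⋃_{j}(-c_j + A) is thick), and N ∈ ℕ. Then the set B = {(s,t) ∈ S × S : s + i·t ∈ ⋃_j (-c_j + A) for all i = 1,...,N} is thick in S × S. -/
import Mathlib


/-- `Thick B`: every finite set has a translate contained in `B`. -/
def Thick {S : Type*} [AddCommSemigroup S] (B : Set S) : Prop :=
  ∀ F : Finset S, ∃ x : S, ∀ f ∈ F, f + x ∈ B

/-- `PiecewiseSyndetic A`: some finite union of translates `-t+A` is thick. -/
def PiecewiseSyndetic {S : Type*} [AddCommSemigroup S] (A : Set S) : Prop :=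
  ∃ F : Finset S, Thick {s : S | ∃ t ∈ F, t + s ∈ A}

/-- `itAdd n t` is the `(n+1)`-fold sum `t + t + ⋯ + t`. -/
def itAdd {S : Type*} [AddCommSemigroup S] : ℕ → S → S
  | 0, t => t
  | n + 1, t => itAdd n t + t

lemma itAdd_add {S : Type*} [AddCommSemigroup S] (i : ℕ) (u v : S) :
    itAdd i (u + v) = itAdd i u + itAdd i v := by
  induction i with
  | zero => rfl
  | succ n ih => simp only [itAdd, ih]; ac_rfl

theorem stmt_16 {S : Type*} [AddCommSemigroup S] (A : Set S) (E : Finset S)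
    (hE : Thick (⋃ c ∈ E, {s : S | c + s ∈ A})) (N : ℕ) :
    Thick {p : S × S |
      ∀ i < N, p.1 + itAdd i p.2 ∈ ⋃ c ∈ E, {s : S | c + s ∈ A}} := by
  intro F
  obtain ⟨d, -⟩ := hE ∅
  classical
  obtain ⟨x₁, hx₁⟩ := hE ((F ×ˢ Finset.range N).image
    fun q => q.1.1 + itAdd q.2 q.1.2 + itAdd q.2 d)
  refine ⟨(x₁, d), ?_⟩
  intro f hf i hi
  have hm : (f, i) ∈ F ×ˢ Finset.range N :=
    Finset.mem_product.mpr ⟨hf, Finset.mem_range.mpr hi⟩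
  have h := hx₁ _ (Finset.mem_image_of_mem _ hm)
  have e : (f + (x₁, d)).1 + itAdd i (f + (x₁, d)).2
      = f.1 + itAdd i f.2 + itAdd i d + x₁ := by
    simp only [Prod.fst_add, Prod.snd_add, itAdd_add]
    ac_rfl
  rw [e]
  exact h
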